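/- arXiv:0810.1804 — 4 statements merged into one kernel-verified Lean document; each statement's English description precedes it below -/
import Mathlib

section
/- There exists e_0 such that for all e ≥ e_0, setting q = p^e, the following holds: for every simple finite-dimensional k-linear representation U of G, there is an injective G-equivariant k-linear map from U into the quotient S/I_q, where I_q ⊆ S is the ideal generated by x_1^q, …, x_d^q (I_q is the Frobenius power m^{[q]} of the homogeneous maximal ideal m = (x_1,…,x_d); it is G-stable, since g(x_i^q) is the q-th power of a linear form in characteristic p, so S/I_q is a finite-dimensional representation of G). Equivalently (since p ∤ |G| makes k[G] semisimple), every irreducible representation of G occurs as a direct summand of S/I_q. -/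
set_option synthInstance.maxHeartbeats 1000000
set_option maxHeartbeats 1000000

open MvPolynomial

/-- The Frobenius power `m^{[q]} = (x_1^q, …, x_d^q)` of the homogeneous maximal ideal of
the polynomial ring `k[x_1, …, x_d]`. -/
noncomputable def frobeniusPowerIdeal (k : Type*) [Field k] (d q : ℕ) :
    Ideal (MvPolynomial (Fin d) k) :=
  Ideal.span (Set.range fun i : Fin d => (X i : MvPolynomial (Fin d) k) ^ q)

/-!
Since `G` acts faithfully on `k^d` and `k` is infinite, some point `a` has trivial stabiliser, so
a product of affine forms gives a polynomial `T` of degree at most `|G|` with `T(a) = 1` and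
`T(g • a) = 0` for `g ≠ 1`. For a nonzero functional `ℓ` on the simple module `U`, the map
`u ↦ ∑_g ℓ(g u) • g⁻¹ T` is `G`-equivariant, and evaluating at `a` recovers `ℓ`, so its kernel is
a proper invariant subspace, hence zero. Its image consists of polynomials of degree
`≤ |G| < q`, and no nonzero such polynomial lies in the monomial ideal `m^{[q]}`. Finally
`m^{[q]}` is `G`-stable because `g (x_i ^ q) = (g x_i) ^ q` is the `q`-th power of a linear form.
-/

namespace Representation

variable {k G U M : Type*} [CommRing k] [Group G] [AddCommGroup U] [Module k U]
  [AddCommGroup M] [Module k M] {ρ : Representation k G U} {ℓ : Module.Dual k U}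

theorem eq_zero_of_forall_dual_apply_eq_zero
    (hρ : ∀ W : Submodule k U, (∀ g, ∀ u ∈ W, ρ g u ∈ W) → W = ⊥ ∨ W = ⊤) (hℓ : ℓ ≠ 0)
    {u : U} (hu : ∀ g, ℓ (ρ g u) = 0) : u = 0 := by
  let K : Submodule k U := ⨅ g, LinearMap.ker (ℓ ∘ₗ ρ g)
  have hK : ∀ w, w ∈ K ↔ ∀ g, ℓ (ρ g w) = 0 := by simp [K]
  have hK_stable : ∀ h, ∀ w ∈ K, ρ h w ∈ K := fun h w hw => (hK _).mpr fun g => by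
    rw [← Module.End.mul_apply, ← map_mul]
    exact (hK w).mp hw (g * h)
  have hK_ne_top : K ≠ ⊤ := fun htop => hℓ <| LinearMap.ext fun w => by
    simpa using (hK w).mp (htop ▸ Submodule.mem_top) 1
  have huK : u ∈ K := (hK u).mpr hu
  rwa [(hρ K hK_stable).resolve_right hK_ne_top, Submodule.mem_bot] at huK

variable [Fintype G]

variable (ρ) in
noncomputable def liftMatrixCoeff (π : Representation k G M) (ℓ : Module.Dual k U) (v : M) :
    U →ₗ[k] M :=
  ∑ g : G, (ℓ ∘ₗ ρ g).smulRight (π g⁻¹ v)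

variable {π : Representation k G M} {v : M}

theorem liftMatrixCoeff_apply (u : U) :
    ρ.liftMatrixCoeff π ℓ v u = ∑ g : G, ℓ (ρ g u) • π g⁻¹ v := by
  simp [liftMatrixCoeff]

theorem liftMatrixCoeff_mem {N : Submodule k M} (hN : ∀ g, π g v ∈ N) (u : U) :
    ρ.liftMatrixCoeff π ℓ v u ∈ N := by
  rw [liftMatrixCoeff_apply]
  exact N.sum_mem fun g _ => N.smul_mem _ (hN g⁻¹)

theorem liftMatrixCoeff_apply_apply (h : G) (u : U) :
    ρ.liftMatrixCoeff π ℓ v (ρ h u) = π h (ρ.liftMatrixCoeff π ℓ v u) := by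
  simp only [liftMatrixCoeff_apply, map_sum, map_smul, ← Module.End.mul_apply, ← map_mul]
  exact Fintype.sum_equiv (Equiv.mulRight h) _ _ fun g => by simp

theorem dual_apply_liftMatrixCoeff {ε : Module.Dual k M} (hε_one : ε v = 1)
    (hε_ne_one : ∀ g ≠ 1, ε (π g v) = 0) (u : U) :
    ε (ρ.liftMatrixCoeff π ℓ v u) = ℓ u := by
  rw [liftMatrixCoeff_apply, map_sum, Finset.sum_eq_single 1]
  · simp [hε_one]
  · intro g _ hg
    rw [map_smul, hε_ne_one _ (inv_ne_one.mpr hg), smul_zero]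
  · simp

theorem eq_zero_of_liftMatrixCoeff_eq_zero
    (hρ : ∀ W : Submodule k U, (∀ g, ∀ u ∈ W, ρ g u ∈ W) → W = ⊥ ∨ W = ⊤) (hℓ : ℓ ≠ 0)
    {ε : Module.Dual k M} (hε_one : ε v = 1) (hε_ne_one : ∀ g ≠ 1, ε (π g v) = 0) {u : U}
    (hu : ρ.liftMatrixCoeff π ℓ v u = 0) : u = 0 :=
  eq_zero_of_forall_dual_apply_eq_zero hρ hℓ fun g => by
    rw [← dual_apply_liftMatrixCoeff hε_one hε_ne_one, liftMatrixCoeff_apply_apply, hu,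
      map_zero, map_zero]

end Representation

namespace MvPolynomial

section CommSemiring

variable {R σ F : Type*} [CommSemiring R]

theorem totalDegree_le_one_of_mem_span_X {f : MvPolynomial σ R}
    (hf : f ∈ Submodule.span R (Set.range (X : σ → MvPolynomial σ R))) :
    f.totalDegree ≤ 1 := by
  induction hf using Submodule.span_induction with
  | mem x hx =>
    obtain ⟨i, rfl⟩ := hx
    exact (totalDegree_monomial_le (Finsupp.single i 1) (1 : R)).trans (by simp)
  | zero => simp
  | add x y _ _ hx hy => exact (totalDegree_add x y).trans (max_le hx hy)
  | smul c x _ hx => exact (totalDegree_smul_le c x).trans hx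

theorem totalDegree_algHom_apply_le [FunLike F (MvPolynomial σ R) (MvPolynomial σ R)]
    [AlgHomClass F R (MvPolynomial σ R) (MvPolynomial σ R)] (g : F)
    (hg : ∀ i, g (X i) ∈ Submodule.span R (Set.range (X : σ → MvPolynomial σ R)))
    (f : MvPolynomial σ R) : (g f).totalDegree ≤ f.totalDegree := by
  conv_lhs => rw [f.as_sum, map_sum]
  refine totalDegree_finsetSum_le fun μ hμ => ?_
  rw [monomial_eq, map_mul, ← algebraMap_eq, AlgHomClass.commutes, algebraMap_eq, Finsupp.prod,
    map_prod]
  calc _ ≤ (C (f.coeff μ)).totalDegree + (∏ i ∈ μ.support, g (X i ^ μ i)).totalDegree :=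
        totalDegree_mul _ _
    _ ≤ 0 + ∑ i ∈ μ.support, μ i * 1 := by
        gcongr
        · exact (totalDegree_C _).le
        · refine (totalDegree_finsetProd _ _).trans (Finset.sum_le_sum fun i _ => ?_)
          rw [map_pow]
          exact (totalDegree_pow _ _).trans
            (Nat.mul_le_mul_left _ (totalDegree_le_one_of_mem_span_X (hg i)))
    _ ≤ f.totalDegree := by simpa [Finsupp.sum] using le_totalDegree hμ

theorem eval_comap (g : MvPolynomial σ R →ₐ[R] MvPolynomial σ R) (x : σ → R)
    (f : MvPolynomial σ R) : eval (comap g x) f = eval x (g f) := by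
  have : aeval (comap g x) = (aeval x).comp g := algHom_ext fun i => by simp
  exact DFunLike.congr_fun this f

end CommSemiring

section Field

variable {k σ : Type*} [Field k]

theorem exists_totalDegree_le_one_eval_eq_one_eval_eq_zero {a b : σ → k} (hab : b ≠ a) :
    ∃ L : MvPolynomial σ k, L.totalDegree ≤ 1 ∧ eval a L = 1 ∧ eval b L = 0 := by
  obtain ⟨i, hi⟩ := Function.ne_iff.mp hab
  refine ⟨C (a i - b i)⁻¹ * (X i - C (b i)), ?_, ?_, by simp⟩
  · refine (totalDegree_mul _ _).trans ?_
    rw [totalDegree_C, zero_add, sub_eq_add_neg, ← map_neg]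
    refine (totalDegree_add _ _).trans (max_le ?_ ((totalDegree_C _).trans_le zero_le_one))
    exact (totalDegree_monomial_le (Finsupp.single i 1) (1 : k)).trans (by simp)
  · simp [inv_mul_cancel₀ (sub_ne_zero.mpr hi.symm)]

theorem exists_totalDegree_le_eval_eq_one_eval_eq_zero (P : Finset (σ → k)) {a : σ → k}
    (ha : a ∉ P) :
    ∃ T : MvPolynomial σ k, T.totalDegree ≤ P.card ∧ eval a T = 1 ∧ ∀ b ∈ P, eval b T = 0 := by
  classical
  induction P using Finset.induction_on with
  | empty => exact ⟨1, by simp, by simp, by simp⟩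
  | insert b P hb ih =>
    obtain ⟨T, hTdeg, hTa, hTP⟩ := ih (fun h => ha (Finset.mem_insert_of_mem h))
    obtain ⟨L, hLdeg, hLa, hLb⟩ := exists_totalDegree_le_one_eval_eq_one_eval_eq_zero
      (a := a) (b := b) (fun h => ha (h ▸ Finset.mem_insert_self b P))
    refine ⟨T * L, ?_, by simp [hTa, hLa], ?_⟩
    · rw [Finset.card_insert_of_notMem hb]
      exact (totalDegree_mul _ _).trans (add_le_add hTdeg hLdeg)
    · simp only [Finset.mem_insert, forall_eq_or_imp, map_mul]
      exact ⟨by rw [hLb, mul_zero], fun c hc => by rw [hTP c hc, zero_mul]⟩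

theorem exists_comap_ne_self [Infinite k] {ι : Type*} [Finite ι]
    (g : ι → MvPolynomial σ k →ₐ[k] MvPolynomial σ k) (hg : ∀ j, g j ≠ AlgHom.id k _) :
    ∃ a : σ → k, ∀ j, comap (g j) a ≠ a := by
  have : Fintype ι := Fintype.ofFinite ι
  have hmoved : ∀ j, ∃ i, g j (X i) ≠ X i := fun j => by
    by_contra! h
    exact hg j (algHom_ext h)
  choose i hi using hmoved
  have hQ : ∏ j, (g j (X (i j)) - X (i j)) ≠ 0 :=
    Finset.prod_ne_zero_iff.mpr fun j _ => sub_ne_zero.mpr (hi j)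
  obtain ⟨a, ha⟩ : ∃ a, eval a (∏ j, (g j (X (i j)) - X (i j))) ≠ 0 := by
    by_contra! h
    exact hQ (MvPolynomial.funext fun a => by simpa using h a)
  refine ⟨a, fun j hj => ?_⟩
  rw [map_prod] at ha
  refine Finset.prod_ne_zero_iff.mp ha j (Finset.mem_univ j) ?_
  rw [map_sub, eval_X, sub_eq_zero]
  exact congrFun hj (i j)

theorem exists_eval_eq_one_eval_apply_eq_zero [Infinite k]
    (G : Subgroup (MvPolynomial σ k ≃ₐ[k] MvPolynomial σ k)) [Finite G] :
    ∃ (a : σ → k) (T : MvPolynomial σ k), T.totalDegree ≤ Nat.card G ∧ eval a T = 1 ∧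
      ∀ g : G, g ≠ 1 → eval a ((g : MvPolynomial σ k ≃ₐ[k] MvPolynomial σ k) T) = 0 := by
  classical
  have : Fintype G := Fintype.ofFinite G
  let orbitMap : {g : G // g ≠ 1} → MvPolynomial σ k →ₐ[k] MvPolynomial σ k :=
    fun g => ((g : G) : MvPolynomial σ k ≃ₐ[k] MvPolynomial σ k)
  obtain ⟨a, ha⟩ := exists_comap_ne_self orbitMap fun g h => g.2 <|
    Subtype.ext <| AlgEquiv.ext fun f => DFunLike.congr_fun h f
  let P := Finset.univ.image fun g => comap (orbitMap g) a
  obtain ⟨T, hTdeg, hTa, hTP⟩ := exists_totalDegree_le_eval_eq_one_eval_eq_zero P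
    (by simpa [P, eq_comm] using ha)
  refine ⟨a, T, hTdeg.trans (Finset.card_image_le.trans ?_), hTa, fun g hg => ?_⟩
  · simp [Nat.card_eq_fintype_card]
  · exact (eval_comap (orbitMap ⟨g, hg⟩) a T).symm.trans
      (hTP _ (Finset.mem_image.mpr ⟨⟨g, hg⟩, Finset.mem_univ _, rfl⟩))

end Field

end MvPolynomial

section FrobeniusPower

variable {k : Type*} [Field k] {d : ℕ}

theorem pow_char_pow_mem_frobeniusPowerIdeal {p : ℕ} [hp : Fact p.Prime] [CharP k p] (e : ℕ)
    {f : MvPolynomial (Fin d) k}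
    (hf : f ∈ Submodule.span k (Set.range (X : Fin d → MvPolynomial (Fin d) k))) :
    f ^ p ^ e ∈ frobeniusPowerIdeal k d (p ^ e) := by
  induction hf using Submodule.span_induction with
  | mem x hx => obtain ⟨i, rfl⟩ := hx; exact Ideal.subset_span ⟨i, rfl⟩
  | zero => rw [zero_pow (pow_ne_zero _ hp.out.ne_zero)]; exact zero_mem _
  | add x y _ _ hx hy => rw [add_pow_char_pow]; exact add_mem hx hy
  | smul c x _ hx => rw [smul_pow, smul_eq_C_mul]; exact Ideal.mul_mem_left _ _ hx

theorem frobeniusPowerIdeal_le_comap {p : ℕ} [Fact p.Prime] [CharP k p] (e : ℕ) {F : Type*}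
    [FunLike F (MvPolynomial (Fin d) k) (MvPolynomial (Fin d) k)]
    [AlgHomClass F k (MvPolynomial (Fin d) k) (MvPolynomial (Fin d) k)] (g : F)
    (hg : ∀ i, g (X i) ∈ Submodule.span k (Set.range (X : Fin d → MvPolynomial (Fin d) k))) :
    frobeniusPowerIdeal k d (p ^ e) ≤ (frobeniusPowerIdeal k d (p ^ e)).comap g := by
  rw [frobeniusPowerIdeal, Ideal.span_le]
  rintro _ ⟨i, rfl⟩
  rw [SetLike.mem_coe, Ideal.mem_comap, map_pow]
  exact pow_char_pow_mem_frobeniusPowerIdeal e (hg i)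

theorem eq_zero_of_mem_frobeniusPowerIdeal {q : ℕ} {f : MvPolynomial (Fin d) k}
    (hf : f ∈ frobeniusPowerIdeal k d q) (hdeg : f.totalDegree < q) : f = 0 := by
  have hspan : frobeniusPowerIdeal k d q =
      Ideal.span ((fun s => monomial s (1 : k)) '' Set.range fun i => Finsupp.single i q) := by
    simp [frobeniusPowerIdeal, ← Set.range_comp, Function.comp_def, X_pow_eq_monomial]
  rw [hspan, mem_ideal_span_monomial_image] at hf
  by_contra hf0
  obtain ⟨μ, hμ⟩ := support_nonempty.mpr hf0
  obtain ⟨_, ⟨i, rfl⟩, hiμ⟩ := hf μ hμ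
  have : q ≤ f.totalDegree := calc
    q ≤ μ i := by simpa using hiμ i
    _ ≤ f.degreeOf i := monomial_le_degreeOf i hμ
    _ ≤ f.totalDegree := degreeOf_le_totalDegree f i
  omega

end FrobeniusPower

theorem statement2_general (k : Type) [Field k] [IsAlgClosed k] (p : ℕ) (hp : p.Prime) [CharP k p]
    (d : ℕ)
    (G : Subgroup (MvPolynomial (Fin d) k ≃ₐ[k] MvPolynomial (Fin d) k)) [Finite G]
    (hlin : ∀ (g : G) (i : Fin d),
      (g : MvPolynomial (Fin d) k ≃ₐ[k] MvPolynomial (Fin d) k) (X i) ∈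
        Submodule.span k (Set.range (X : Fin d → MvPolynomial (Fin d) k))) :
    ∃ e₀ : ℕ, ∀ e : ℕ, e₀ ≤ e →
      ∀ (U : Type) [AddCommGroup U] [Module k U] (ρ : Representation k G U),
        FiniteDimensional k U → Nontrivial U →
        (∀ W : Submodule k U, (∀ (g : G), ∀ u ∈ W, ρ g u ∈ W) → W = ⊥ ∨ W = ⊤) →
        ∃ φ : U →ₗ[k] (MvPolynomial (Fin d) k ⧸ frobeniusPowerIdeal k d (p ^ e)),
          Function.Injective φ ∧
          ∀ (g : G) (u : U) (s : MvPolynomial (Fin d) k),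
            Ideal.Quotient.mk (frobeniusPowerIdeal k d (p ^ e)) s = φ u →
            Ideal.Quotient.mk (frobeniusPowerIdeal k d (p ^ e))
                ((g : MvPolynomial (Fin d) k ≃ₐ[k] MvPolynomial (Fin d) k) s) =
              φ (ρ g u) := by
  have : Fact p.Prime := ⟨hp⟩
  have : Fintype G := Fintype.ofFinite G
  obtain ⟨a, T, hTdeg, hTa, hTg⟩ := exists_eval_eq_one_eval_apply_eq_zero G
  refine ⟨Nat.card G, fun e he U _ _ ρ _ _ hρ => ?_⟩
  set I := frobeniusPowerIdeal k d (p ^ e)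
  have hq : Nat.card G < p ^ e :=
    (Nat.lt_pow_self hp.one_lt).trans_le (Nat.pow_le_pow_right hp.pos he)
  obtain ⟨ℓ, hℓ⟩ : ∃ ℓ : Module.Dual k U, ℓ ≠ 0 := exists_ne 0
  let π := Representation.ofDistribMulAction k G (MvPolynomial (Fin d) k)
  let Θ := ρ.liftMatrixCoeff π ℓ T
  have hΘ_deg (u : U) : (Θ u).totalDegree < p ^ e := by
    have hT (g : G) : π g T ∈ restrictTotalDegree (Fin d) k (Nat.card G) :=
      (mem_restrictTotalDegree _ _ _).mpr ((totalDegree_algHom_apply_le _ (hlin g) T).trans hTdeg)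
    exact ((mem_restrictTotalDegree _ _ _).mp (Representation.liftMatrixCoeff_mem hT u)).trans_lt hq
  have hI (g : G) :
      I ≤ I.comap (g : MvPolynomial (Fin d) k ≃ₐ[k] MvPolynomial (Fin d) k) :=
    frobeniusPowerIdeal_le_comap e _ (hlin g)
  refine ⟨(Ideal.Quotient.mkₐ k I).toLinearMap ∘ₗ Θ, ?_, fun g u s hs => ?_⟩
  · rw [← LinearMap.ker_eq_bot, LinearMap.ker_eq_bot']
    intro u hu
    refine Representation.eq_zero_of_liftMatrixCoeff_eq_zero hρ hℓ (ε := (aeval a).toLinearMap)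
      hTa hTg (eq_zero_of_mem_frobeniusPowerIdeal ?_ (hΘ_deg u))
    exact Ideal.Quotient.eq_zero_iff_mem.mp hu
  · have hsΘ : s - Θ u ∈ I := Ideal.Quotient.eq.mp hs
    change _ = Ideal.Quotient.mk I (Θ (ρ g u))
    rw [Representation.liftMatrixCoeff_apply_apply, Ideal.Quotient.eq]
    exact (map_sub (g : MvPolynomial (Fin d) k ≃ₐ[k] MvPolynomial (Fin d) k) s (Θ u)) ▸ hI g hsΘ

/-- Let `k` be an algebraically closed field of characteristic `p > 0`,
`S = k[x_1, …, x_d]` with `d ≥ 1`, and `G` a finite group of `k`-algebra automorphisms of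
`S` acting linearly on the variables, with `p ∤ |G|`. Then there exists `e₀` such that for
all `e ≥ e₀`, with `q = p^e`, every simple finite-dimensional `k`-linear representation
`U` of `G` embeds `G`-equivariantly and `k`-linearly into `S/m^{[q]}`. -/
theorem statement2 (k : Type) [Field k] [IsAlgClosed k] (p : ℕ) (hp : p.Prime) [CharP k p]
    (d : ℕ) (hd : 1 ≤ d)
    (G : Subgroup (MvPolynomial (Fin d) k ≃ₐ[k] MvPolynomial (Fin d) k)) [Finite G]
    (hlin : ∀ (g : G) (i : Fin d),
      (g : MvPolynomial (Fin d) k ≃ₐ[k] MvPolynomial (Fin d) k) (X i) ∈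
        Submodule.span k (Set.range (X : Fin d → MvPolynomial (Fin d) k)))
    (hord : ¬ p ∣ Nat.card G) :
    ∃ e₀ : ℕ, ∀ e : ℕ, e₀ ≤ e →
      ∀ (U : Type) [AddCommGroup U] [Module k U] (ρ : Representation k G U),
        FiniteDimensional k U → Nontrivial U →
        (∀ W : Submodule k U, (∀ (g : G), ∀ u ∈ W, ρ g u ∈ W) → W = ⊥ ∨ W = ⊤) →
        ∃ φ : U →ₗ[k] (MvPolynomial (Fin d) k ⧸ frobeniusPowerIdeal k d (p ^ e)),
          Function.Injective φ ∧
          ∀ (g : G) (u : U) (s : MvPolynomial (Fin d) k),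
            Ideal.Quotient.mk (frobeniusPowerIdeal k d (p ^ e)) s = φ u →
            Ideal.Quotient.mk (frobeniusPowerIdeal k d (p ^ e))
                ((g : MvPolynomial (Fin d) k ≃ₐ[k] MvPolynomial (Fin d) k) s) =
              φ (ρ g u) :=
  statement2_general k p hp d G hlin
end

section
/- For every irreducible finite-dimensional k-linear representation U of G, the module of covariants R(U) := (S ⊗_k U)^G (the G-fixed points of S ⊗_k U under the diagonal G-action, which is a module over R = S^G) is isomorphic to a direct summand of S as an R-module; that is, there exist R-linear maps ι : (S ⊗_k U)^G → S and π : S → (S ⊗_k U)^G with π ∘ ι = id. (In other words, S ≅ (k[G] ⊗_k S)^G is a full module of covariants over R.) -/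
set_option synthInstance.maxHeartbeats 1000000
set_option maxHeartbeats 1000000

open MvPolynomial TensorProduct

/-- The diagonal action of `g ∈ G` on `S ⊗_k U`, where `g` acts on `S` as a `k`-algebra
automorphism and on `U` through the representation `ρ`. -/
noncomputable def diagAction (k : Type) [Field k] (d : ℕ)
    (G : Subgroup (MvPolynomial (Fin d) k ≃ₐ[k] MvPolynomial (Fin d) k))
    (U : Type) [AddCommGroup U] [Module k U] (ρ : Representation k G U) (g : G) :
    (MvPolynomial (Fin d) k ⊗[k] U) →ₗ[k] (MvPolynomial (Fin d) k ⊗[k] U) :=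
  TensorProduct.map
    (g : MvPolynomial (Fin d) k ≃ₐ[k] MvPolynomial (Fin d) k).toLinearMap (ρ g)

/-- The module of covariants `R(U) = (S ⊗_k U)^G`: the `G`-fixed points of `S ⊗_k U`
under the diagonal action. -/
noncomputable def covariants (k : Type) [Field k] (d : ℕ)
    (G : Subgroup (MvPolynomial (Fin d) k ≃ₐ[k] MvPolynomial (Fin d) k))
    (U : Type) [AddCommGroup U] [Module k U] (ρ : Representation k G U) :
    Submodule k (MvPolynomial (Fin d) k ⊗[k] U) :=
  ⨅ g : G, LinearMap.eqLocus (diagAction k d G U ρ g) LinearMap.id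

/-!
By Schur's lemma the `G`-average of any endomorphism of the irreducible `U` is a scalar. The
rank-one operators `v ↦ φ v • u` of a basis sum to the identity, whose average is itself, so one
of them averages to `c • id` with `c ≠ 0`. Put `ι = c⁻¹ • (id_S ⊗ φ)`, which is `S`-linear, and
`π s = avg (s ⊗ u)`, which is `S^G`-linear. For invariant `x`, averaging `(id_S ⊗ (v ↦ φ v • u)) x`
only averages the operator, giving `c • x`; hence `π (ι x) = x`.
-/

namespace Representation

variable {k G V : Type*} [Field k] [Group G] [AddCommGroup V] [Module k V]
  (ρ : Representation k G V)

theorem isIrreducible_of_forall_submodule [Nontrivial V]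
    (h : ∀ W : Submodule k V, (∀ g : G, ∀ v ∈ W, ρ g v ∈ W) → W = ⊥ ∨ W = ⊤) :
    IsIrreducible ρ where
  exists_pair_ne := ⟨⊥, ⊤, fun h => bot_ne_top (congrArg Subrepresentation.toSubmodule h)⟩
  eq_bot_or_eq_top W :=
    (h W.toSubmodule fun g _ hv => W.apply_mem_toSubmodule g hv).imp
      (fun hW => Subrepresentation.toSubmodule_injective hW)
      (fun hW => Subrepresentation.toSubmodule_injective hW)

theorem IsIrreducible.exists_eq_smul_id [IsIrreducible ρ] [FiniteDimensional k V] [IsAlgClosed k]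
    {f : V →ₗ[k] V} (hf : f ∈ (linHom ρ ρ).invariants) : ∃ c : k, f = c • LinearMap.id := by
  obtain ⟨c, hc⟩ := (IsIrreducible.algebraMap_intertwiningMap_bijective_of_isAlgClosed
    (ρ := ρ)).2 (invariantsEquivIntertwiningMap ρ ρ ⟨f, hf⟩)
  refine ⟨c, ?_⟩
  ext v
  have := congrArg (fun F : IntertwiningMap ρ ρ => F v) hc
  simpa [invariantsEquivIntertwiningMap, Algebra.algebraMap_eq_smul_one] using this.symm

theorem IsIrreducible.nontrivial [IsIrreducible ρ] : Nontrivial V := by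
  by_contra h
  rw [not_nontrivial_iff_subsingleton] at h
  exact bot_ne_top (α := Subrepresentation ρ)
    (Subrepresentation.toSubmodule_injective (Subsingleton.elim _ _))

section Average
variable [Fintype G] [Invertible (Fintype.card G : k)]

theorem averageMap_apply (v : V) :
    averageMap ρ v = ⅟(Fintype.card G : k) • ∑ g : G, ρ g v := by
  simp [GroupAlgebra.average, map_sum]

theorem averageMap_linHom_id : averageMap (linHom ρ ρ) LinearMap.id = LinearMap.id :=
  averageMap_id _ _ fun g => by ext v; simp [← Module.End.mul_apply, ← map_mul]

theorem exists_averageMap_linHom_smulRight_ne_zero [Nontrivial V] [FiniteDimensional k V] :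
    ∃ (φ : Module.Dual k V) (u : V), averageMap (linHom ρ ρ) (φ.smulRight u) ≠ 0 := by
  by_contra! h
  let b := Module.finBasis k V
  have hid : ∑ i, (b.coord i).smulRight (b i) = LinearMap.id := by
    ext v; simp [b.sum_repr v]
  have hzero : averageMap (linHom ρ ρ) LinearMap.id = 0 := by
    rw [← hid, map_sum, Finset.sum_eq_zero fun i _ => h _ _]
  rw [averageMap_linHom_id] at hzero
  exact one_ne_zero (α := Module.End k V) hzero

end Average

section TensorProduct
variable {W : Type*} [AddCommGroup W] [Module k W] (σ : Representation k G W)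

theorem tprod_apply_lTensor (f : V →ₗ[k] V) (g : G) (x : W ⊗[k] V) :
    tprod σ ρ g (f.lTensor W x) = (linHom ρ ρ g f).lTensor W (tprod σ ρ g x) := by
  induction x using TensorProduct.induction_on with
  | zero => simp
  | tmul w v => simp
  | add x y hx hy => simp only [map_add, hx, hy]

theorem averageMap_tprod_lTensor [Fintype G] [Invertible (Fintype.card G : k)]
    (f : V →ₗ[k] V) {x : W ⊗[k] V} (hx : x ∈ (tprod σ ρ).invariants) :
    averageMap (tprod σ ρ) (f.lTensor W x) = (averageMap (linHom ρ ρ) f).lTensor W x := by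
  let Φ : (V →ₗ[k] V) →ₗ[k] W ⊗[k] V := LinearMap.applyₗ x ∘ₗ LinearMap.lTensorHom W
  have hΦ : ∀ f, Φ f = f.lTensor W x := fun _ => rfl
  have hx' := (mem_invariants _ x).1 hx
  rw [averageMap_apply, averageMap_apply, ← hΦ (_ • _), map_smul, map_sum]
  simp only [hΦ, tprod_apply_lTensor, hx']

theorem lTensor_smulRight_apply {S : Type*} [Semiring S] [Algebra k S] (φ : Module.Dual k V)
    (u : V) (x : S ⊗[k] V) :
    (φ.smulRight u).lTensor S x =
      AlgebraTensorModule.rid k S S (AlgebraTensorModule.lTensor S S φ x) ⊗ₜ u := by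
  induction x using TensorProduct.induction_on with
  | zero => simp
  | tmul s v =>
    simp only [LinearMap.lTensor_tmul, LinearMap.smulRight_apply, AlgebraTensorModule.lTensor_tmul,
      AlgebraTensorModule.rid_tmul]
    rw [tmul_smul, smul_tmul']
  | add x y hx hy => simp only [map_add, hx, hy, add_tmul]

end TensorProduct

section Covariants
variable {S : Type*} [CommRing S] [Algebra k S] [MulSemiringAction G S] [SMulCommClass G k S]

theorem tprod_ofDistribMulAction_apply_smul (g : G) (r : S) (x : S ⊗[k] V) :
    tprod (ofDistribMulAction k G S) ρ g (r • x) =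
      (g • r) • tprod (ofDistribMulAction k G S) ρ g x := by
  induction x using TensorProduct.induction_on with
  | zero => simp
  | tmul s v => simp [smul_tmul']
  | add x y hx hy => simp only [smul_add, map_add, hx, hy]

theorem averageMap_tprod_ofDistribMulAction_smul [Fintype G] [Invertible (Fintype.card G : k)]
    {r : S} (hr : ∀ g : G, g • r = r) (x : S ⊗[k] V) :
    averageMap (tprod (ofDistribMulAction k G S) ρ) (r • x) =
      r • averageMap (tprod (ofDistribMulAction k G S) ρ) x := by
  simp only [averageMap_apply, tprod_ofDistribMulAction_apply_smul, hr, ← Finset.smul_sum]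
  exact smul_comm _ _ _

theorem exists_splitting_of_isIrreducible [Fintype G] [Invertible (Fintype.card G : k)]
    [IsAlgClosed k] [FiniteDimensional k V] [IsIrreducible ρ] :
    ∃ (ι : S ⊗[k] V →ₗ[S] S) (π : S →ₗ[k] S ⊗[k] V),
      (∀ s, π s ∈ (tprod (ofDistribMulAction k G S) ρ).invariants) ∧
      (∀ x ∈ (tprod (ofDistribMulAction k G S) ρ).invariants, π (ι x) = x) ∧
      ∀ r : S, (∀ g : G, g • r = r) → ∀ s, π (r * s) = r • π s := by
  have := IsIrreducible.nontrivial ρ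
  obtain ⟨φ, u, hne⟩ := exists_averageMap_linHom_smulRight_ne_zero ρ
  obtain ⟨c, hc⟩ := IsIrreducible.exists_eq_smul_id ρ (averageMap_invariant _ (φ.smulRight u))
  have hc0 : c ≠ 0 := by rintro rfl; exact hne (by simpa using hc)
  let contract : S ⊗[k] V →ₗ[S] S :=
    (AlgebraTensorModule.rid k S S).toLinearMap ∘ₗ AlgebraTensorModule.lTensor S S φ
  let insert : S →ₗ[S] S ⊗[k] V := LinearMap.toSpanSingleton S _ (1 ⊗ₜ u)
  have insert_contract (x : S ⊗[k] V) : insert (contract x) = (φ.smulRight u).lTensor S x := by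
    rw [lTensor_smulRight_apply, LinearMap.toSpanSingleton_apply, smul_tmul', smul_eq_mul, mul_one]
    rfl
  refine ⟨c⁻¹ • contract, averageMap _ ∘ₗ insert.restrictScalars k,
    fun s => averageMap_invariant _ _, fun x hx => ?_, fun r hr s => ?_⟩
  · rw [LinearMap.comp_apply, LinearMap.restrictScalars_apply, LinearMap.smul_apply,
      LinearMap.map_smul_of_tower, insert_contract, map_smul, averageMap_tprod_lTensor _ _ _ hx, hc]
    simp [smul_smul, hc0]
  · simp only [LinearMap.comp_apply, LinearMap.restrictScalars_apply, ← smul_eq_mul, map_smul,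
      averageMap_tprod_ofDistribMulAction_smul _ hr]

end Covariants
end Representation

theorem covariants_eq_invariants_tprod (k : Type) [Field k] (d : ℕ)
    (G : Subgroup (MvPolynomial (Fin d) k ≃ₐ[k] MvPolynomial (Fin d) k))
    (U : Type) [AddCommGroup U] [Module k U] (ρ : Representation k G U) :
    covariants k d G U ρ =
      (Representation.tprod (Representation.ofDistribMulAction k G (MvPolynomial (Fin d) k))
        ρ).invariants := by
  ext x
  simp only [covariants, Submodule.mem_iInf, LinearMap.mem_eqLocus,
    Representation.mem_invariants]
  rfl

theorem statement4_general (k : Type) [Field k] [IsAlgClosed k] (p : ℕ) [CharP k p] (d : ℕ)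
    (G : Subgroup (MvPolynomial (Fin d) k ≃ₐ[k] MvPolynomial (Fin d) k)) [Finite G]
    (hord : ¬ p ∣ Nat.card G)
    (U : Type) [AddCommGroup U] [Module k U] (ρ : Representation k G U)
    (hfd : FiniteDimensional k U) (hnt : Nontrivial U)
    (hirr : ∀ W : Submodule k U, (∀ (g : G), ∀ u ∈ W, ρ g u ∈ W) → W = ⊥ ∨ W = ⊤) :
    ∃ (ι : ↥(covariants k d G U ρ) →ₗ[k] MvPolynomial (Fin d) k)
      (π : MvPolynomial (Fin d) k →ₗ[k] ↥(covariants k d G U ρ)),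
      (∀ x, π (ι x) = x) ∧
      ∀ r : MvPolynomial (Fin d) k,
        (∀ g : G, (g : MvPolynomial (Fin d) k ≃ₐ[k] MvPolynomial (Fin d) k) r = r) →
        (∀ (x : MvPolynomial (Fin d) k ⊗[k] U) (hx : x ∈ covariants k d G U ρ)
            (hrx : r • x ∈ covariants k d G U ρ),
          ι ⟨r • x, hrx⟩ = r * ι ⟨x, hx⟩) ∧
        (∀ s : MvPolynomial (Fin d) k,
          ((π (r * s) : ↥(covariants k d G U ρ)) : MvPolynomial (Fin d) k ⊗[k] U) =
            r • ((π s : ↥(covariants k d G U ρ)) : MvPolynomial (Fin d) k ⊗[k] U)) := by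
  have := Fintype.ofFinite G
  have : Invertible (Fintype.card G : k) := invertibleOfNonzero <| by
    rwa [← Nat.card_eq_fintype_card, Ne, CharP.cast_eq_zero_iff k p]
  have := Representation.isIrreducible_of_forall_submodule ρ hirr
  obtain ⟨ι, π, hπ_mem, hπι, hπ_smul⟩ :=
    Representation.exists_splitting_of_isIrreducible (S := MvPolynomial (Fin d) k) ρ
  rw [covariants_eq_invariants_tprod]
  exact ⟨(ι.restrictScalars k).domRestrict _, π.codRestrict _ hπ_mem,
    fun x => Subtype.ext (hπι x x.2), fun r hr => ⟨fun x _ _ => ι.map_smul r x, hπ_smul r hr⟩⟩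

/-- Let `k` be an algebraically closed field of characteristic `p > 0`,
`S = k[x_1, …, x_d]` with `d ≥ 1`, and `G` a finite group of `k`-algebra automorphisms of
`S` acting linearly on the variables, with `p ∤ |G|`; let `R = S^G`. For every irreducible
finite-dimensional representation `U` of `G`, the module of covariants
`R(U) = (S ⊗_k U)^G` is a direct summand of `S` as an `R`-module: there are maps
`ι : R(U) → S` and `π : S → R(U)` which are `k`-linear and `R`-linear (the latter expressed
elementwise) with `π ∘ ι = id`. -/
theorem statement4 (k : Type) [Field k] [IsAlgClosed k] (p : ℕ) (hp : p.Prime) [CharP k p]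
    (d : ℕ) (hd : 1 ≤ d)
    (G : Subgroup (MvPolynomial (Fin d) k ≃ₐ[k] MvPolynomial (Fin d) k)) [Finite G]
    (hlin : ∀ (g : G) (i : Fin d),
      (g : MvPolynomial (Fin d) k ≃ₐ[k] MvPolynomial (Fin d) k) (X i) ∈
        Submodule.span k (Set.range (X : Fin d → MvPolynomial (Fin d) k)))
    (hord : ¬ p ∣ Nat.card G)
    (U : Type) [AddCommGroup U] [Module k U] (ρ : Representation k G U)
    (hfd : FiniteDimensional k U) (hnt : Nontrivial U)
    (hirr : ∀ W : Submodule k U, (∀ (g : G), ∀ u ∈ W, ρ g u ∈ W) → W = ⊥ ∨ W = ⊤) :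
    ∃ (ι : ↥(covariants k d G U ρ) →ₗ[k] MvPolynomial (Fin d) k)
      (π : MvPolynomial (Fin d) k →ₗ[k] ↥(covariants k d G U ρ)),
      (∀ x, π (ι x) = x) ∧
      ∀ r : MvPolynomial (Fin d) k,
        (∀ g : G, (g : MvPolynomial (Fin d) k ≃ₐ[k] MvPolynomial (Fin d) k) r = r) →
        (∀ (x : MvPolynomial (Fin d) k ⊗[k] U) (hx : x ∈ covariants k d G U ρ)
            (hrx : r • x ∈ covariants k d G U ρ),
          ι ⟨r • x, hrx⟩ = r * ι ⟨x, hx⟩) ∧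
        (∀ s : MvPolynomial (Fin d) k,
          ((π (r * s) : ↥(covariants k d G U ρ)) : MvPolynomial (Fin d) k ⊗[k] U) =
            r • ((π s : ↥(covariants k d G U ρ)) : MvPolynomial (Fin d) k ⊗[k] U)) :=
  statement4_general k p d G hord U ρ hfd hnt hirr
end

section
/- Let k be a field of odd prime characteristic p and let d ≥ 1. In the polynomial ring k[x_0, …, x_d], the element (x_0^2 + x_1^2 + ⋯ + x_d^2)^{p-1} does not belong to the ideal generated by x_0^p, x_1^p, …, x_d^p. (Indeed, the monomial x_0^{p-1} x_1^{p-1} · x_2^0 ⋯ x_d^0 appears in the expansion with coefficient a nonzero multiple of the binomial coefficient C(p-1, (p-1)/2), which is nonzero in k.) -/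
/-!
Substituting `x_i ↦ x_i²` shows that the coefficient of `x^(2α)` in `(∑ x_i²)^n` is the
multinomial coefficient of `α` when `|α| = n`. For `n = p - 1` and `α = m e_a + m e_b` with
`a ≠ b`, `p = 2m + 1`, this is the coefficient of `x_a^(p-1) x_b^(p-1)`, and it is prime to `p`
because it divides `(p - 1)!`. A monomial ideal contains a polynomial only if every monomial
of its support is divisible by a generator, and no `x_i^p` divides `x_a^(p-1) x_b^(p-1)`.
-/

open MvPolynomial

theorem Nat.Prime.not_dvd_multinomial {α : Type*} {p : ℕ} (hp : p.Prime) {d : α →₀ ℕ}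
    (hd : d.sum (fun _ m ↦ m) < p) : ¬ p ∣ d.multinomial := by
  intro hdvd
  have hfac : p ∣ Nat.factorial (d.sum fun _ m ↦ m) :=
    (Nat.multinomial_spec d.support d ▸ hdvd.mul_left _ :)
  exact (hp.dvd_factorial.mp hfac).not_gt hd

namespace MvPolynomial

variable {σ R : Type*} [CommSemiring R]

theorem mem_span_range_X_pow_iff {n : ℕ} {f : MvPolynomial σ R} :
    f ∈ Ideal.span (Set.range fun i => (X i : MvPolynomial σ R) ^ n) ↔
      ∀ s ∈ f.support, ∃ i, n ≤ s i := by
  have hgens : (Set.range fun i => (X i : MvPolynomial σ R) ^ n) =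
      (fun s => monomial s (1 : R)) '' Set.range fun i => Finsupp.single i n := by
    simp only [← Set.range_comp, Function.comp_def, X_pow_eq_monomial]
  simp [hgens, mem_ideal_span_monomial_image, Finsupp.single_le_iff]

variable [Fintype σ]

theorem coeff_two_nsmul_sum_X_sq_pow (d : σ →₀ ℕ) (n : ℕ) :
    coeff (2 • d) ((∑ i, X i ^ 2 : MvPolynomial σ R) ^ n) =
      if d.sum (fun _ m ↦ m) = n then d.multinomial else 0 := by
  have hexpand : (∑ i, X i ^ 2 : MvPolynomial σ R) = expand 2 (∑ i, X i) := by
    simp only [map_sum, expand_X]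
  rw [hexpand, ← map_pow, coeff_expand_smul _ two_ne_zero, coeff_sum_X_pow_of_fintype]

theorem sum_X_sq_pow_pred_notMem_span_X_pow [Nontrivial σ] {p : ℕ} (hp : p.Prime)
    (hodd : Odd p) [CharP R p] :
    (∑ i, X i ^ 2 : MvPolynomial σ R) ^ (p - 1) ∉
      Ideal.span (Set.range fun i => (X i : MvPolynomial σ R) ^ p) := by
  obtain ⟨a, b, hab⟩ := exists_pair_ne σ
  obtain ⟨m, rfl⟩ := hodd
  set d : σ →₀ ℕ := Finsupp.single a m + Finsupp.single b m
  have hd_sum : d.sum (fun _ k ↦ k) = 2 * m + 1 - 1 := by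
    rw [Finsupp.sum_add_index' (fun _ ↦ rfl) fun _ _ _ ↦ rfl, Finsupp.sum_single_index rfl,
      Finsupp.sum_single_index rfl]
    omega
  have hd_le : ∀ i, d i ≤ m := by
    intro i
    classical
    simp only [d, Finsupp.add_apply, Finsupp.single_apply]
    split_ifs with ha hb hb
    · exact absurd (ha.trans hb.symm) hab
    all_goals omega
  have hcoeff : coeff (2 • d) ((∑ i, X i ^ 2 : MvPolynomial σ R) ^ (2 * m + 1 - 1)) ≠ 0 := by
    rw [coeff_two_nsmul_sum_X_sq_pow, if_pos hd_sum, Ne, CharP.cast_eq_zero_iff R (2 * m + 1)]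
    exact hp.not_dvd_multinomial (by omega)
  intro hmem
  obtain ⟨i, hi⟩ := mem_span_range_X_pow_iff.mp hmem _ (mem_support_iff.mpr hcoeff)
  rw [Finsupp.smul_apply, smul_eq_mul] at hi
  have := hd_le i
  omega

end MvPolynomial

/-- Let `k` be a field of odd prime characteristic `p` and `d ≥ 1`. In
`k[x_0, …, x_d]`, the element `(x_0^2 + ⋯ + x_d^2)^(p-1)` does not belong to the ideal
generated by `x_0^p, …, x_d^p`. -/
theorem statement13 (k : Type*) [Field k] (p : ℕ) (hp : p.Prime) (hodd : Odd p) [CharP k p]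
    (d : ℕ) (hd : 1 ≤ d) :
    ((∑ i : Fin (d + 1), X i ^ 2 : MvPolynomial (Fin (d + 1)) k) ^ (p - 1)) ∉
      Ideal.span (Set.range fun i : Fin (d + 1) =>
        (X i : MvPolynomial (Fin (d + 1)) k) ^ p) := by
  have : Nontrivial (Fin (d + 1)) := Fin.nontrivial_iff_two_le.mpr (by omega)
  exact sum_X_sq_pow_pred_notMem_span_X_pow hp hodd
end

section
/- Let k be an algebraically closed field of odd characteristic p and let d ≥ 1. Let R = k[[x_0, …, x_d]]/(x_0^2 + x_1^2 + ⋯ + x_d^2) be the d-dimensional simple (A_1) hypersurface singularity. Then R is F-pure: there exists an additive map φ : R → R with φ(1) = 1 and φ(a^p · b) = a · φ(b) for all a, b ∈ R (equivalently, the inclusion R^p ↪ R splits as an R^p-module homomorphism). -/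
/-- The `d`-dimensional simple hypersurface singularity of type `A₁`:
`R = k[[x_0, …, x_d]] / (x_0^2 + x_1^2 + ⋯ + x_d^2)`. -/
def A1Singularity (k : Type*) [Field k] (d : ℕ) : Type _ :=
  MvPowerSeries (Fin (d + 1)) k ⧸
    Ideal.span {(∑ i : Fin (d + 1), MvPowerSeries.X i ^ 2 : MvPowerSeries (Fin (d + 1)) k)}

noncomputable instance (k : Type*) [Field k] (d : ℕ) : CommRing (A1Singularity k d) :=
  Ideal.Quotient.commRing _

/-!
Write `S = k[[x_0, …, x_d]]` and `f = ∑ x_i²`. As `k` is perfect, `S` is free over `S^p` on the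
monomials `x^e` with all `e_i < p`, and taking the `x^e`-coordinate is the `S^p`-linear map
`Φ_e g = ∑_n (g_{pn+e})^{1/p} x^n` (`frobeniusContract p e`). Following Fedder,
`θ = Φ_e (f^(p-1) * ·)` maps `(f)` into itself because `f^(p-1) * f = f^p`, so it descends to
`R = S/(f)`; and `θ 1` is a unit as soon as the coefficient of `x^e` in `f^(p-1)` is nonzero, so
`θ` rescaled by `(θ 1)⁻¹` splits `R^p ⊆ R`. For `p = 2t + 1` and `x^e = (x_0 x_1)^(2t)` that
coefficient is `(2t).choose t`, prime to `p`.
-/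

theorem Nat.le_and_eq_of_mul_add_eq_mul_add {p m n v e : ℕ} (he : e < p)
    (h : p * m + v = p * n + e) : m ≤ n ∧ v = p * (n - m) + e := by
  have hmn : m ≤ n := by
    by_contra! hlt
    have := Nat.mul_le_mul_left p hlt
    rw [Nat.mul_succ] at this
    omega
  refine ⟨hmn, ?_⟩
  rw [Nat.mul_sub]
  have := Nat.mul_le_mul_left p hmn
  omega

theorem Finsupp.le_and_eq_of_nsmul_add_eq_nsmul_add {σ : Type*} {p : ℕ} {m n v e : σ →₀ ℕ}
    (he : ∀ i, e i < p) (h : p • m + v = p • n + e) : m ≤ n ∧ v = p • (n - m) + e := by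
  have hi i := Nat.le_and_eq_of_mul_add_eq_mul_add (he i) (by simpa using DFunLike.congr_fun h i)
  exact ⟨fun i => (hi i).1, Finsupp.ext fun i => by simpa using (hi i).2⟩

namespace MvPowerSeries

variable {σ R : Type*} [CommRing R]

noncomputable def contract (p : ℕ) (e : σ →₀ ℕ) : MvPowerSeries σ R →ₗ[R] MvPowerSeries σ R where
  toFun g n := coeff (p • n + e) g
  map_add' _ _ := rfl
  map_smul' _ _ := rfl

theorem coeff_contract (p : ℕ) (e n : σ →₀ ℕ) (g : MvPowerSeries σ R) :
    coeff n (contract p e g) = coeff (p • n + e) g := rfl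

theorem contract_expand_mul {p : ℕ} (hp : p ≠ 0) {e : σ →₀ ℕ} (he : ∀ i, e i < p)
    (a g : MvPowerSeries σ R) :
    contract p e (expand p hp a * g) = a * contract p e g := by
  classical
  ext n
  simp only [coeff_contract, coeff_mul]
  symm
  refine Finset.sum_of_injOn (fun x => (p • x.1, p • x.2 + e)) ?_ ?_ ?_ ?_
  · rintro ⟨x₁, x₂⟩ - ⟨y₁, y₂⟩ - h
    simp only [Prod.mk.injEq, add_left_inj, nsmul_right_inj hp] at h
    rw [h.1, h.2]
  · rintro ⟨x₁, x₂⟩ hx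
    simp only [Finset.mem_coe, Finset.HasAntidiagonal.mem_antidiagonal] at hx ⊢
    rw [← add_assoc, ← smul_add, hx]
  · rintro ⟨y₁, y₂⟩ hy hy_notMem
    by_contra hne
    obtain ⟨m, -, rfl⟩ := support_expand_subset p hp a (left_ne_zero_of_mul hne)
    rw [Finset.HasAntidiagonal.mem_antidiagonal] at hy
    obtain ⟨hmn, rfl⟩ := Finsupp.le_and_eq_of_nsmul_add_eq_nsmul_add he hy
    exact hy_notMem ⟨(m, n - m), by simpa using add_tsub_cancel_of_le hmn, rfl⟩
  · intro x _
    rw [coeff_expand_smul]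

section Frobenius

variable (p : ℕ) [ExpChar R p] [PerfectRing R p]

noncomputable def frobeniusContract (e : σ →₀ ℕ) : MvPowerSeries σ R →+ MvPowerSeries σ R :=
  (map ((frobeniusEquiv R p).symm : R →+* R)).toAddMonoidHom.comp (contract p e).toAddMonoidHom

theorem constantCoeff_frobeniusContract (e : σ →₀ ℕ) (g : MvPowerSeries σ R) :
    constantCoeff (frobeniusContract p e g) = (frobeniusEquiv R p).symm (coeff e g) := by
  rw [← coeff_zero_eq_constantCoeff_apply, frobeniusContract]
  simp [coeff_map, coeff_contract]

theorem frobeniusContract_pow_mul {e : σ →₀ ℕ} (he : ∀ i, e i < p) (a g : MvPowerSeries σ R) :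
    frobeniusContract p e (a ^ p * g) = a * frobeniusContract p e g := by
  have hp : p ≠ 0 := expChar_ne_zero R p
  rw [← map_frobenius_expand p hp, map_expand]
  simp only [frobeniusContract, AddMonoidHom.coe_comp, Function.comp_apply,
    LinearMap.toAddMonoidHom_coe, RingHom.toAddMonoidHom_eq_coe, AddMonoidHom.coe_coe,
    contract_expand_mul hp he, map_mul]
  congr 1
  ext n
  simp

end Frobenius

theorem coeff_single_add_single_sum_X_sq_pow [Fintype σ] [DecidableEq σ] {i j : σ} (hij : i ≠ j)
    (a b : ℕ) :
    coeff (Finsupp.single i (2 * a) + Finsupp.single j (2 * b))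
      ((∑ l, X l ^ 2 : MvPowerSeries σ R) ^ (a + b)) = (a + b).choose a := by
  set e := Finsupp.single i (2 * a) + Finsupp.single j (2 * b)
  set h : MvPowerSeries σ R := X i ^ 2 + X j ^ 2
  set g : MvPowerSeries σ R := ∑ l ∈ Finset.univ \ {i, j}, X l ^ 2
  have hsum : ∑ l, X l ^ 2 = h + g := by
    rw [← Finset.sum_sdiff (Finset.subset_univ {i, j}), Finset.sum_pair hij, add_comm]
  have hcoeff_g_mul (c : MvPowerSeries σ R) : coeff e (g * c) = 0 := by
    rw [Finset.sum_mul, map_sum]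
    refine Finset.sum_eq_zero fun l hl => ?_
    obtain ⟨hli, hlj⟩ : l ≠ i ∧ l ≠ j := by simpa using hl
    rw [X_pow_eq, coeff_monomial_mul, if_neg]
    intro hle
    simpa [e, Finsupp.single_apply, hli.symm, hlj.symm] using hle l
  obtain ⟨c, hc⟩ := sub_dvd_pow_sub_pow (h + g) h (a + b)
  rw [hsum, ← sub_add_cancel ((h + g) ^ (a + b)) (h ^ (a + b)), hc, add_sub_cancel_left, map_add,
    hcoeff_g_mul, zero_add]
  have hterm (m : ℕ) :
      (X i ^ 2) ^ m * (X j ^ 2) ^ (a + b - m) * ((a + b).choose m : MvPowerSeries σ R) =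
        monomial (Finsupp.single i (2 * m) + Finsupp.single j (2 * (a + b - m)))
          ((a + b).choose m : R) := by
    rw [← map_natCast (C (σ := σ)), ← pow_mul, ← pow_mul, X_pow_eq, X_pow_eq,
      ← monomial_zero_eq_C_apply, monomial_mul_monomial, monomial_mul_monomial, one_mul, one_mul,
      add_zero, mul_comm 2, mul_comm 2]
  rw [add_pow, map_sum, Finset.sum_eq_single a]
  · rw [hterm, Nat.add_sub_cancel_left, coeff_monomial, if_pos rfl]
  · intro m _ hma
    rw [hterm, coeff_monomial, if_neg]
    intro heq
    simpa [e, Finsupp.single_apply, hij.symm, Ne.symm hma] using DFunLike.congr_fun heq i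
  · intro ha
    simp at ha

end MvPowerSeries

def IsFrobeniusSplit (S : Type*) [CommRing S] (p : ℕ) : Prop :=
  ∃ φ : S →+ S, φ 1 = 1 ∧ ∀ a b : S, φ (a ^ p * b) = a * φ b

theorem isFrobeniusSplit_quotient_span_singleton {S : Type*} [CommRing S] {p : ℕ} (hp : p ≠ 0)
    (f : S) (θ : S →+ S) (hθ : ∀ a b, θ (a ^ p * b) = a * θ b) (hf : IsUnit (θ (f ^ (p - 1)))) :
    IsFrobeniusSplit (S ⧸ Ideal.span {f}) p := by
  obtain ⟨u, hu⟩ := hf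
  set I := Ideal.span {f}
  let ψ : S →+ S :=
    (AddMonoidHom.mulLeft (↑u⁻¹ : S)).comp (θ.comp (AddMonoidHom.mulLeft (f ^ (p - 1))))
  have hψ (a b : S) : ψ (a ^ p * b) = a * ψ b := by
    simp only [ψ, AddMonoidHom.coe_comp, Function.comp_apply, AddMonoidHom.coe_mulLeft]
    rw [mul_left_comm, hθ, mul_left_comm]
  have hψI : I.toAddSubgroup ≤ I.toAddSubgroup.comap ψ := by
    intro x hx
    obtain ⟨c, rfl⟩ := Ideal.mem_span_singleton'.mp hx
    have hfp : f ^ (p - 1) * (c * f) = f ^ p * c := by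
      rw [mul_left_comm, ← pow_succ, Nat.sub_add_cancel (Nat.one_le_iff_ne_zero.mpr hp), mul_comm]
    have hψf : ψ (c * f) = ↑u⁻¹ * θ c * f := by
      simp only [ψ, AddMonoidHom.coe_comp, Function.comp_apply, AddMonoidHom.coe_mulLeft, hfp, hθ]
      ring
    simp only [AddSubgroup.mem_comap, Submodule.mem_toAddSubgroup, hψf]
    exact Ideal.mul_mem_left _ _ (Ideal.mem_span_singleton_self f)
  refine ⟨QuotientAddGroup.map _ _ ψ hψI, ?_, ?_⟩
  · show Ideal.Quotient.mk I (ψ 1) = 1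
    simp [ψ, ← hu]
  · intro a b
    obtain ⟨a, rfl⟩ := Ideal.Quotient.mk_surjective a
    obtain ⟨b, rfl⟩ := Ideal.Quotient.mk_surjective b
    rw [← map_pow, ← map_mul]
    show Ideal.Quotient.mk I (ψ (a ^ p * b)) = _
    rw [hψ, map_mul]
    rfl

open MvPowerSeries in
/-- Let `k` be an algebraically closed field of odd characteristic `p` and
`d ≥ 1`. Then the `A₁`-singularity `R = k[[x_0, …, x_d]]/(x_0^2 + ⋯ + x_d^2)` is F-pure:
there is an additive map `φ : R → R` with `φ 1 = 1` and `φ (a^p * b) = a * φ b` for all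
`a, b ∈ R`, i.e. the inclusion `R^p ↪ R` splits as an `R^p`-module homomorphism. -/
theorem statement14 (k : Type*) [Field k] [IsAlgClosed k]
    (p : ℕ) (hp : p.Prime) (hodd : Odd p) [CharP k p] (d : ℕ) (hd : 1 ≤ d) :
    ∃ φ : A1Singularity k d →+ A1Singularity k d,
      φ 1 = 1 ∧ ∀ a b : A1Singularity k d, φ (a ^ p * b) = a * φ b := by
  have : Fact p.Prime := ⟨hp⟩
  have : NeZero d := ⟨by omega⟩
  have h01 : (0 : Fin (d + 1)) ≠ 1 := Fin.zero_ne_one'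
  obtain ⟨t, hpt⟩ := hodd
  set e : Fin (d + 1) →₀ ℕ := Finsupp.single 0 (2 * t) + Finsupp.single 1 (2 * t)
  have he (i : Fin (d + 1)) : e i < p := by
    simp only [e, Finsupp.add_apply, Finsupp.single_apply]
    split_ifs with h0 h1
    · exact absurd (h0.trans h1.symm) h01
    all_goals omega
  have hcoeff : coeff e ((∑ i, X i ^ 2 : MvPowerSeries (Fin (d + 1)) k) ^ (p - 1)) ≠ 0 := by
    rw [show p - 1 = t + t by omega, coeff_single_add_single_sum_X_sq_pow h01,
      ne_eq, CharP.cast_eq_zero_iff k p, ← hp.coprime_iff_not_dvd]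
    exact hp.coprime_choose_of_lt (by omega) (by omega)
  refine isFrobeniusSplit_quotient_span_singleton hp.ne_zero _ (frobeniusContract p e)
    (frobeniusContract_pow_mul p he) ?_
  rw [isUnit_iff_constantCoeff, constantCoeff_frobeniusContract, isUnit_iff_ne_zero]
  exact (map_ne_zero_iff _ (RingEquiv.injective _)).mpr hcoeff
end
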